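/- Let G be a locally compact group, 𝒜 an admissible subalgebra of LUC(G) containing C₀(G), and T ⊆ G with closure(ε(T)) ∩ G*G* = ∅ in G^𝒜, where G* = G^𝒜 \ ε(G). Then KT is right translation-compact for every relatively compact subset K of G. -/

import Mathlib

open Pointwise

/-- An abstract model of the compactification `G^𝒜` associated to a unital
left-translation-invariant C*-subalgebra `A` of `CB(G)`: a compact Hausdorff space `X` together
with the (dense-range) evaluation map `ε : G → X`, the natural left action of `G` on `X`
(`(ε(s)x)(f) = x(ₛf)`), and the Gelfand correspondence identifying `A` with `C(X)`. -/
structure GCompactification (G : Type*) [TopologicalSpace G] [Group G]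
    (A : Set (G → ℂ)) (X : Type*) [TopologicalSpace X] [CompactSpace X] [T2Space X] where
  eps : G → X
  dense : DenseRange eps
  act : G → X → X
  act_eps : ∀ s t : G, act s (eps t) = eps (s * t)
  act_mul : ∀ s t : G, ∀ x : X, act (s * t) x = act s (act t x)
  act_cont : ∀ s : G, Continuous (act s)
  gelfand : (G → ℂ) → (X → ℂ)
  gelfand_cont : ∀ f ∈ A, Continuous (gelfand f)
  gelfand_eps : ∀ f ∈ A, ∀ s : G, gelfand f (eps s) = f s
  mem_of_cont : ∀ φ : X → ℂ, Continuous φ → (fun s => φ (eps s)) ∈ A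

/-- The semigroup compactification `G^𝒜` of an admissible subalgebra `A`: additionally `X` carries
an associative multiplication which is right topological, extends that of `G`, and restricts to
the action of `G`. -/
structure GSemigroupCompactification (G : Type*) [TopologicalSpace G] [Group G]
    (A : Set (G → ℂ)) (X : Type*) [TopologicalSpace X] [CompactSpace X] [T2Space X]
    extends GCompactification G A X where
  mul : X → X → X
  mul_assoc : ∀ x y z : X, mul (mul x y) z = mul x (mul y z)
  right_cont : ∀ y : X, Continuous fun x => mul x y
  eps_act : ∀ (s : G) (x : X), mul (eps s) x = act s x

/-- `T` is an `𝒜`-set: for every open neighbourhood `U` of `e` there is an open neighbourhood `V`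
of `e` with `closure V ⊆ U` such that for each `T₁ ⊆ T` some `h ∈ A` is `1` on `VT₁` and `0` off
`UT₁`. -/
def IsASet {G : Type*} [TopologicalSpace G] [Group G] (A : Set (G → ℂ)) (T : Set G) : Prop :=
  ∀ U : Set G, IsOpen U → (1 : G) ∈ U →
    ∃ V : Set G, IsOpen V ∧ (1 : G) ∈ V ∧ closure V ⊆ U ∧
      ∀ T₁ ⊆ T, ∃ h ∈ A, (∀ x ∈ V * T₁, h x = 1) ∧ (∀ x ∉ U * T₁, h x = 0)

/-- Right translation-compact subsets of a topological group. -/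
def RightTranslationCompact {G : Type*} [Group G] [TopologicalSpace G] (T : Set G) : Prop :=
  ∀ L : Set G, ¬ IsCompact (closure L) →
    ∃ F : Set G, F ⊆ L ∧ F.Finite ∧ IsCompact (closure (⋂ b ∈ F, (b * ·) ⁻¹' T))

/-!
Suppose `KT` is not right translation-compact, as witnessed by `L`. By compactness of `G^𝒜` there
are points `p` at infinity in the closure of `ε(L)` and `q` at infinity in the closure of every
`ε(⋂_{b ∈ F} b⁻¹KT)`, `F ⊆ L` finite; since `C₀(G) ⊆ 𝒜`, both lie in `G*`. Each `bq` with
`b ∈ L` lies in the closure of `ε(KT)`, hence so does `pq` by right continuity. Joint continuity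
of the action puts that closure inside `K̄ · closure ε(T)`, so `pq = kx` with `x ∈ closure ε(T)`,
and then `x = (k⁻¹p)q ∈ G*G*`.
-/

open Filter Topology Set

section RelativelyCompact

variable {G : Type*} [TopologicalSpace G]

theorem neBot_principal_inf_cocompact_iff [R1Space G] {L : Set G} :
    (𝓟 L ⊓ cocompact G).NeBot ↔ ¬ IsCompact (closure L) := by
  rw [neBot_iff, Ne, ← disjoint_iff, disjoint_cocompact_right, not_iff_not]
  exact ⟨fun ⟨K, hLK, hK⟩ => hK.closure_of_subset hLK, fun h => ⟨closure L, subset_closure, h⟩⟩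

theorem exists_neBot_of_not_rightTranslationCompact [Group G] [R1Space G] {S : Set G}
    (h : ¬ RightTranslationCompact S) :
    ∃ L : Set G, (𝓟 L ⊓ cocompact G).NeBot ∧
      ((⨅ b ∈ L, 𝓟 ((b * ·) ⁻¹' S)) ⊓ cocompact G).NeBot := by
  simp only [RightTranslationCompact, not_forall, exists_prop] at h
  obtain ⟨L, hL, hF⟩ := h
  refine ⟨L, neBot_principal_inf_cocompact_iff.2 hL, ?_⟩
  rw [neBot_iff, Ne, ← disjoint_iff, disjoint_cocompact_right]
  rintro ⟨K, hK, hKc⟩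
  obtain ⟨F, hFfin, hFL, hFK⟩ := mem_biInf_principal.1 hK
  exact hF ⟨F, hFL, hFfin, hKc.closure_of_subset hFK⟩

end RelativelyCompact

namespace GCompactification

variable {G : Type*} [TopologicalSpace G] [Group G] {A : Set (G → ℂ)} {X : Type*}
  [TopologicalSpace X] [CompactSpace X] [T2Space X] (C : GCompactification G A X)

theorem act_one (x : X) : C.act 1 x = x := by
  have : C.act 1 = id :=
    C.dense.equalizer (C.act_cont 1) continuous_id (funext fun t => by simp [C.act_eps])
  rw [this, id]

theorem act_inv_act (k : G) (x : X) : C.act k⁻¹ (C.act k x) = x := by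
  rw [← C.act_mul, inv_mul_cancel, act_one]

theorem act_mem_range_iff {k : G} {x : X} : C.act k x ∈ range C.eps ↔ x ∈ range C.eps := by
  constructor
  · rintro ⟨s, hs⟩
    exact ⟨k⁻¹ * s, by rw [← C.act_eps, hs, act_inv_act]⟩
  · rintro ⟨s, rfl⟩
    exact ⟨k * s, (C.act_eps k s).symm⟩

theorem act_mem_closure_image_of_mem_closure {b : G} {S : Set G} {q : X}
    (hq : q ∈ closure (C.eps '' ((b * ·) ⁻¹' S))) : C.act b q ∈ closure (C.eps '' S) :=
  map_mem_closure (C.act_cont b) hq <| by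
    rintro _ ⟨t, ht, rfl⟩
    exact ⟨b * t, ht, (C.act_eps b t).symm⟩

/-- A function of `C₀(G)` not vanishing at `s` separates `ε(s)` from every point at infinity. -/
theorem notMem_range_of_clusterPt [RegularSpace G] [LocallyCompactSpace G]
    (hC0 : ∀ f : G → ℂ, Continuous f → Tendsto f (cocompact G) (𝓝 0) → f ∈ A)
    {l : Filter G} (hl : l ≤ cocompact G) {x : X} (hx : ClusterPt x (map C.eps l)) :
    x ∉ range C.eps := by
  rintro ⟨s, rfl⟩
  obtain ⟨φ, hφs, -, hφc, -⟩ := exists_continuous_one_zero_of_isCompact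
    (isCompact_singleton (x := s)) isClosed_empty (disjoint_empty _)
  set g : G → ℂ := fun t => (φ t : ℂ)
  have hg0 : Tendsto g (cocompact G) (𝓝 0) := (hφc.comp_left Complex.ofReal_zero).is_zero_at_infty
  have hgA : g ∈ A := hC0 g (by fun_prop) hg0
  have hgε : C.gelfand g ∘ C.eps = g := funext (C.gelfand_eps g hgA)
  have hcl : ClusterPt (C.gelfand g (C.eps s)) (𝓝 0) := by
    have h := hx.map (C.gelfand_cont g hgA).continuousAt tendsto_map
    rw [map_map, hgε] at h
    exact h.mono ((map_mono hl).trans hg0)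
  have h0 : g s = 0 := by rw [← C.gelfand_eps g hgA]; exact eq_of_nhds_neBot hcl
  simp [g, hφs rfl] at h0

theorem closure_image_mul_subset (hjc : Continuous fun p : G × X => C.act p.1 p.2) {K : Set G}
    (hK : IsCompact (closure K)) (T : Set G) :
    closure (C.eps '' (K * T)) ⊆
      (fun p : G × X => C.act p.1 p.2) '' (closure K ×ˢ closure (C.eps '' T)) := by
  have hcpt := (hK.prod (isClosed_closure (s := C.eps '' T)).isCompact).image hjc
  refine closure_minimal ?_ hcpt.isClosed
  rintro _ ⟨_, ⟨k, hk, t, ht, rfl⟩, rfl⟩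
  exact ⟨(k, C.eps t), ⟨subset_closure hk, subset_closure (mem_image_of_mem _ ht)⟩, C.act_eps k t⟩

end GCompactification

namespace GSemigroupCompactification

variable {G : Type*} [TopologicalSpace G] [Group G] {A : Set (G → ℂ)} {X : Type*}
  [TopologicalSpace X] [CompactSpace X] [T2Space X] (C : GSemigroupCompactification G A X)

theorem act_mul_assoc (k : G) (p q : X) : C.mul (C.act k p) q = C.act k (C.mul p q) := by
  rw [← C.eps_act, ← C.eps_act, C.mul_assoc]

theorem mul_mem_of_forall_act_mem {L : Set G} {Y : Set X} (hY : IsClosed Y) {p q : X}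
    (hp : p ∈ closure (C.eps '' L)) (hq : ∀ b ∈ L, C.act b q ∈ Y) : C.mul p q ∈ Y := by
  refine MapsTo.closure_left ?_ (C.right_cont q) hY hp
  rintro _ ⟨b, hb, rfl⟩
  simpa only [C.eps_act] using hq b hb

end GSemigroupCompactification

theorem rtc_of_closure_disjoint_from_remainder_products_general
    {G : Type*} [TopologicalSpace G] [Group G]
    [LocallyCompactSpace G] [T2Space G]
    (A : Set (G → ℂ)) {X : Type*} [TopologicalSpace X] [CompactSpace X] [T2Space X]
    (C : GSemigroupCompactification G A X)
    (hC0 : ∀ f : G → ℂ, Continuous f → Filter.Tendsto f (Filter.cocompact G) (nhds 0) → f ∈ A)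
    (hjc : Continuous fun p : G × X => C.act p.1 p.2)
    (T : Set G)
    (hT : ∀ p q : X, p ∉ Set.range C.eps → q ∉ Set.range C.eps →
      C.mul p q ∉ closure (C.eps '' T)) :
    ∀ K : Set G, IsCompact (closure K) → RightTranslationCompact (K * T) := by
  intro K hK
  by_contra hKT
  obtain ⟨L, hLne, hQne⟩ := exists_neBot_of_not_rightTranslationCompact hKT
  obtain ⟨p, hp⟩ := exists_clusterPt_of_compactSpace (map C.eps (𝓟 L ⊓ cocompact G))
  obtain ⟨q, hq⟩ := exists_clusterPt_of_compactSpace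
    (map C.eps ((⨅ b ∈ L, 𝓟 ((b * ·) ⁻¹' (K * T))) ⊓ cocompact G))
  have hpL : p ∈ closure (C.eps '' L) :=
    hp.mem_closure_of_mem _ (image_mem_map (mem_inf_of_left (mem_principal_self L)))
  have hbq (b : G) (hb : b ∈ L) : C.act b q ∈ closure (C.eps '' (K * T)) :=
    C.act_mem_closure_image_of_mem_closure <| hq.mem_closure_of_mem _ <| image_mem_map <|
      mem_inf_of_left (mem_iInf_of_mem b (mem_iInf_of_mem hb (mem_principal_self _)))
  obtain ⟨⟨k, x⟩, ⟨-, hx⟩, hkx⟩ := C.closure_image_mul_subset hjc hK T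
    (C.mul_mem_of_forall_act_mem isClosed_closure hpL hbq)
  refine hT (C.act k⁻¹ p) q ?_ (C.notMem_range_of_clusterPt hC0 inf_le_right hq) ?_
  · rw [C.act_mem_range_iff]
    exact C.notMem_range_of_clusterPt hC0 inf_le_right hp
  · rwa [C.act_mul_assoc, ← hkx, C.act_inv_act]

/-- Theorem 7.1, (i) ⇒ (ii): if `C₀(G) ⊆ 𝒜` and the closure of `ε(T)` in `G^𝒜` misses `G*G*`
(where `G* = G^𝒜 \ ε(G)`), then `KT` is right translation-compact for every relatively compact
`K ⊆ G`. -/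
theorem rtc_of_closure_disjoint_from_remainder_products
    {G : Type*} [TopologicalSpace G] [Group G] [IsTopologicalGroup G]
    [LocallyCompactSpace G] [T2Space G]
    (A : Set (G → ℂ)) {X : Type*} [TopologicalSpace X] [CompactSpace X] [T2Space X]
    (C : GSemigroupCompactification G A X)
    (hC0 : ∀ f : G → ℂ, Continuous f → Filter.Tendsto f (Filter.cocompact G) (nhds 0) → f ∈ A)
    (hjc : Continuous fun p : G × X => C.act p.1 p.2)
    (T : Set G)
    (hT : ∀ p q : X, p ∉ Set.range C.eps → q ∉ Set.range C.eps →
      C.mul p q ∉ closure (C.eps '' T)) :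
    ∀ K : Set G, IsCompact (closure K) → RightTranslationCompact (K * T) :=
  rtc_of_closure_disjoint_from_remainder_products_general A C hC0 hjc T hT
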